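/- The map (M,N) ↦ Tr[(√M − √N)²] = |√M − √N|_F² is jointly convex on pairs of symmetric positive semidefinite k×k matrices. -/

import Mathlib

/-!
Ando's proof of Lieb's concavity theorem for `(M, N) ↦ Tr (√M √N)`. Since
`‖√M - √N‖² = Tr M + Tr N - 2 Tr (√M √N)` and the trace is linear, joint convexity is joint
concavity of `Tr (√M √N)`.

For symmetric `E`, `F` the block matrix `[[E² ⊗ 1, E ⊗ F], [E ⊗ F, 1 ⊗ F²]]` is a Gram matrix,
hence positive semidefinite, and it is affine in `(E², F², E ⊗ F)`. Taking the convex combination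
of the blocks for `(√M₁, √N₁)` and `(√M₂, √N₂)` gives a positive semidefinite block with diagonal
`M ⊗ 1`, `1 ⊗ N` and off-diagonal `X = t √M₁ ⊗ √N₁ + (1 - t) √M₂ ⊗ √N₂`. Its Schur complement,
together with the operator monotonicity of the square root, gives `X ≤ √M ⊗ √N`. Evaluated at
`vec 1`, where `vec 1 ⬝ (A ⊗ B) vec 1 = Tr (Aᵀ B)`, this inequality is the concavity.
-/

/-- Squared Frobenius norm of a real k×k matrix. -/
noncomputable def frobSq {k : ℕ} (X : Matrix (Fin k) (Fin k) ℝ) : ℝ :=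
  ∑ i, ∑ j, X i j ^ 2

open scoped ComplexOrder in
/-- The positive semidefinite square root of a positive semidefinite matrix -/
noncomputable def Matrix.PosSemidef.sqrt {n : Type*} [Fintype n] [DecidableEq n] {𝕜 : Type*}
    [RCLike 𝕜] {A : Matrix n n 𝕜} (hA : A.PosSemidef) : Matrix n n 𝕜 :=
  hA.1.eigenvectorUnitary.1 * Matrix.diagonal ((↑) ∘ (√·) ∘ hA.1.eigenvalues) *
  (star hA.1.eigenvectorUnitary : Matrix n n 𝕜)

open Matrix
open scoped Kronecker MatrixOrder

namespace Matrix

section RCLike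

open scoped ComplexOrder

variable {n m 𝕜 : Type*} [Fintype n] [Fintype m] [RCLike 𝕜]

lemma PosSemidef.posSemidef_sqrt [DecidableEq n] {A : Matrix n n 𝕜} (hA : A.PosSemidef) :
    hA.sqrt.PosSemidef :=
  (PosSemidef.diagonal fun i => by simp [Real.sqrt_nonneg]).mul_mul_conjTranspose_same _

lemma PosSemidef.sqrt_mul_self [DecidableEq n] {A : Matrix n n 𝕜} (hA : A.PosSemidef) :
    hA.sqrt * hA.sqrt = A := by
  set U : Matrix n n 𝕜 := hA.1.eigenvectorUnitary.1
  have hU : star U * U = 1 := Unitary.coe_star_mul_self _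
  have hs : ∀ i, √(hA.1.eigenvalues i) * √(hA.1.eigenvalues i) = hA.1.eigenvalues i :=
    fun i => Real.mul_self_sqrt (hA.eigenvalues_nonneg i)
  conv_rhs => rw [hA.1.spectral_theorem, Unitary.conjStarAlgAut_apply]
  calc hA.sqrt * hA.sqrt
      = U * (diagonal ((↑) ∘ (√·) ∘ hA.1.eigenvalues) * (star U * U) *
          diagonal ((↑) ∘ (√·) ∘ hA.1.eigenvalues)) * star U := by
        simp only [PosSemidef.sqrt, U, Matrix.mul_assoc]
    _ = _ := by
        rw [hU, Matrix.mul_one, diagonal_mul_diagonal]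
        simp only [Function.comp_def, ← RCLike.ofReal_mul, hs]
        rfl

lemma PosDef.mul_self [DecidableEq n] {E : Matrix n n 𝕜} (hE : E.PosDef) : (E * E).PosDef := by
  have := PosDef.conjTranspose_mul_self E (mulVec_injective_iff_isUnit.mpr hE.isUnit)
  rwa [hE.1.eq] at this

lemma PosSemidef.fromBlocks_zero [DecidableEq n] {A : Matrix n n 𝕜} (hA : A.PosSemidef) :
    (fromBlocks A 0 0 (0 : Matrix m m 𝕜)).PosSemidef := by
  have := hA.conjTranspose_mul_mul_same (fromCols (1 : Matrix n n 𝕜) (0 : Matrix n m 𝕜))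
  rwa [conjTranspose_fromCols_eq_fromRows_conjTranspose, conjTranspose_one, conjTranspose_zero,
    fromRows_mul, fromRows_mul_fromCols, Matrix.one_mul, Matrix.mul_one, Matrix.mul_zero,
    Matrix.zero_mul, Matrix.zero_mul, Matrix.mul_zero] at this

lemma posSemidef_fromBlocks_mul_self_kronecker [DecidableEq n] [DecidableEq m]
    {E : Matrix n n 𝕜} {F : Matrix m m 𝕜} (hE : E.IsHermitian) (hF : F.IsHermitian) :
    (fromBlocks ((E * E) ⊗ₖ 1) (E ⊗ₖ F) (E ⊗ₖ F) (1 ⊗ₖ (F * F))).PosSemidef := by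
  simpa only [conjTranspose_fromCols_eq_fromRows_conjTranspose, fromRows_mul_fromCols,
    conjTranspose_kronecker, conjTranspose_one, hE.eq, hF.eq, ← mul_kronecker_mul,
    Matrix.one_mul, Matrix.mul_one] using
    posSemidef_conjTranspose_mul_self (fromCols (E ⊗ₖ (1 : Matrix m m 𝕜)) ((1 : Matrix n n 𝕜) ⊗ₖ F))

end RCLike

lemma vec_one_dotProduct_kronecker_mulVec {n R : Type*} [Fintype n] [DecidableEq n]
    [CommSemiring R] (A B : Matrix n n R) :
    vec (1 : Matrix n n R) ⬝ᵥ (A ⊗ₖ B) *ᵥ vec 1 = trace (Aᵀ * B) := by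
  rw [kronecker_mulVec_vec, vec_dotProduct_vec, transpose_one, Matrix.one_mul, Matrix.mul_one,
    trace_mul_comm]

variable {n m : Type*} [Fintype n] [Fintype m]

lemma PosSemidef.transpose_sqrt [DecidableEq n] {A : Matrix n n ℝ} (hA : A.PosSemidef) :
    hA.sqrtᵀ = hA.sqrt :=
  (isHermitian_iff_isSymm.mp hA.posSemidef_sqrt.1).eq

open Filter Topology in
lemma posSemidef_of_forall_pos_add_smul {A B : Matrix n n ℝ} (hA : A.IsHermitian)
    (h : ∀ ε : ℝ, 0 < ε → (A + ε • B).PosSemidef) : A.PosSemidef := by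
  refine .of_dotProduct_mulVec_nonneg hA fun v => ?_
  have hcont : Continuous fun ε : ℝ => star v ⬝ᵥ (A + ε • B) *ᵥ v := by
    simp only [add_mulVec, smul_mulVec, dotProduct_add, dotProduct_smul, smul_eq_mul]
    fun_prop
  have hlim : Tendsto (fun ε : ℝ => star v ⬝ᵥ (A + ε • B) *ᵥ v) (𝓝[>] 0)
      (𝓝 (star v ⬝ᵥ A *ᵥ v)) := by
    simpa using (hcont.tendsto 0).mono_left nhdsWithin_le_nhds
  exact ge_of_tendsto hlim (eventually_nhdsWithin_of_forall fun ε hε =>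
    (h ε hε).dotProduct_mulVec_nonneg v)

lemma IsHermitian.le_of_mul_self_le [DecidableEq n] {W H : Matrix n n ℝ} (hW : W.IsHermitian)
    (hH : H.PosSemidef) (h : W * W ≤ H * H) : W ≤ H := by
  -- A unit eigenvector `v` of `H - W` with eigenvalue `μ` gives
  -- `0 ≤ vᵀ (H² - W²) v = μ (2 vᵀ H v - μ)`, which forces `0 ≤ μ`.
  have hD : (H - W).IsHermitian := hH.1.sub hW
  refine hD.posSemidef_iff_eigenvalues_nonneg.mpr fun i => ?_
  set μ := hD.eigenvalues i
  set v : n → ℝ := (hD.eigenvectorBasis i).ofLp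
  have hDv : (H - W) *ᵥ v = μ • v := hD.mulVec_eigenvectorBasis i
  have hvD : v ᵥ* (H - W) = μ • v := by
    rw [← mulVec_transpose, ← conjTranspose_eq_transpose_of_trivial, hD.eq, hDv]
  have hvv : v ⬝ᵥ v = 1 := by
    have := hD.eigenvectorBasis.inner_eq_one i
    rwa [EuclideanSpace.inner_eq_star_dotProduct, star_trivial] at this
  set a := v ⬝ᵥ H *ᵥ v
  have ha : 0 ≤ a := by simpa using hH.dotProduct_mulVec_nonneg v
  have hWv : v ⬝ᵥ W *ᵥ v = a - μ := by
    rw [show W = H - (H - W) by abel, sub_mulVec, dotProduct_sub, hDv, dotProduct_smul, hvv,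
      smul_eq_mul, mul_one]
  have hquad : v ⬝ᵥ (H * H - W * W) *ᵥ v = μ * (2 * a - μ) := by
    rw [show H * H - W * W = H * (H - W) + (H - W) * W by noncomm_ring, add_mulVec,
      dotProduct_add, ← mulVec_mulVec, ← mulVec_mulVec, hDv, dotProduct_mulVec v (H - W), hvD,
      mulVec_smul, dotProduct_smul, smul_dotProduct, hWv]
    simp only [smul_eq_mul]
    ring
  have h0 : 0 ≤ v ⬝ᵥ (H * H - W * W) *ᵥ v := by
    simpa using (le_iff.mp h).dotProduct_mulVec_nonneg v
  show 0 ≤ μ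
  nlinarith

section Kronecker

variable [DecidableEq n] [DecidableEq m]

lemma PosDef.le_kronecker_of_posSemidef_fromBlocks {E : Matrix n n ℝ} {F : Matrix m m ℝ}
    (hE : E.PosDef) (hF : F.PosSemidef) {X : Matrix (n × m) (n × m) ℝ} (hX : X.IsHermitian)
    (h : (fromBlocks ((E * E) ⊗ₖ 1) X X (1 ⊗ₖ (F * F))).PosSemidef) : X ≤ E ⊗ₖ F := by
  have hP : ((E * E) ⊗ₖ (1 : Matrix m m ℝ)).PosDef := hE.mul_self.kronecker PosDef.one
  have := hP.isUnit.invertible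
  have hSchur : (1 ⊗ₖ (F * F) - X * ((E * E) ⊗ₖ 1)⁻¹ * X).PosSemidef := by
    simpa only [hX.eq] using (PosDef.fromBlocks₁₁ X (1 ⊗ₖ (F * F)) hP).mp (by rwa [hX.eq])
  have hdet : IsUnit E.det := isUnit_iff_ne_zero.mpr hE.det_pos.ne'
  -- Conjugating the Schur complement by `R = E⁻¹ ⊗ 1` gives `(R X R)² ≤ (E⁻¹ ⊗ F)²`; take square
  -- roots and conjugate back by `G = E ⊗ 1`.
  set G := E ⊗ₖ (1 : Matrix m m ℝ)
  set R := E⁻¹ ⊗ₖ (1 : Matrix m m ℝ)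
  have hG : star G = G := by
    simp only [G, star_eq_conjTranspose, conjTranspose_kronecker, hE.1.eq, conjTranspose_one]
  have hR : Rᴴ = R := by
    simp only [R, conjTranspose_kronecker, hE.inv.1.eq, conjTranspose_one]
  have hRR : R * R = ((E * E) ⊗ₖ 1)⁻¹ := by
    rw [inv_kronecker, Matrix.mul_inv_rev, inv_one, ← mul_kronecker_mul, Matrix.one_mul]
  have hW : (R * X * R).IsHermitian := by
    simpa only [hR] using isHermitian_conjTranspose_mul_mul R hX
  have hsq : (R * X * R) * (R * X * R) ≤ (E⁻¹ ⊗ₖ F) * (E⁻¹ ⊗ₖ F) := by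
    have hRQR : R * (1 ⊗ₖ (F * F)) * R = (E⁻¹ ⊗ₖ F) * (E⁻¹ ⊗ₖ F) := by
      simp only [R, ← mul_kronecker_mul, Matrix.one_mul, Matrix.mul_one]
    have hconj : (E⁻¹ ⊗ₖ F) * (E⁻¹ ⊗ₖ F) - (R * X * R) * (R * X * R) =
        Rᴴ * (1 ⊗ₖ (F * F) - X * ((E * E) ⊗ₖ 1)⁻¹ * X) * R := by
      rw [hR, ← hRR, ← hRQR]
      noncomm_ring
    rw [le_iff, hconj]
    exact hSchur.conjTranspose_mul_mul_same R
  have hGXG : G * (R * X * R) * G = X := by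
    have hGR : G * R = 1 := by
      rw [← mul_kronecker_mul, Matrix.mul_one, mul_nonsing_inv E hdet, one_kronecker_one]
    have hRG : R * G = 1 := by
      rw [← mul_kronecker_mul, Matrix.mul_one, nonsing_inv_mul E hdet, one_kronecker_one]
    rw [show G * (R * X * R) * G = (G * R) * X * (R * G) by noncomm_ring, hGR, hRG,
      Matrix.one_mul, Matrix.mul_one]
  have hGHG : G * (E⁻¹ ⊗ₖ F) * G = E ⊗ₖ F := by
    rw [← mul_kronecker_mul, ← mul_kronecker_mul, mul_nonsing_inv E hdet, Matrix.one_mul,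
      Matrix.one_mul, Matrix.mul_one]
  simpa only [hG, hGXG, hGHG] using star_left_conjugate_le_conjugate
    (hW.le_of_mul_self_le (hE.inv.posSemidef.kronecker hF) hsq) G

lemma PosSemidef.le_kronecker_of_posSemidef_fromBlocks {E : Matrix n n ℝ} {F : Matrix m m ℝ}
    (hE : E.PosSemidef) (hF : F.PosSemidef) {X : Matrix (n × m) (n × m) ℝ} (hX : X.IsHermitian)
    (h : (fromBlocks ((E * E) ⊗ₖ 1) X X (1 ⊗ₖ (F * F))).PosSemidef) : X ≤ E ⊗ₖ F := by
  refine le_iff.mpr <| posSemidef_of_forall_pos_add_smul (B := 1 ⊗ₖ F)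
    ((hE.kronecker hF).1.sub hX) fun ε hε => ?_
  -- `E + ε` is invertible, and replacing `E` by it only adds a PSD term to the upper-left block.
  have hEε : (E + ε • 1).PosDef := PosDef.posSemidef_add hE (PosDef.one.smul hε)
  have hblock :
      (fromBlocks (((E + ε • 1) * (E + ε • 1)) ⊗ₖ 1) X X (1 ⊗ₖ (F * F))).PosSemidef := by
    have hsq : (E + ε • 1) * (E + ε • 1) = E * E + ε • (E + (E + ε • 1)) := by
      simp only [Matrix.add_mul, Matrix.mul_add, Matrix.smul_mul, Matrix.mul_smul,
        Matrix.one_mul, Matrix.mul_one, smul_add]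
      abel
    rw [hsq, add_kronecker, ← add_zero X, ← add_zero (1 ⊗ₖ (F * F)), ← fromBlocks_add]
    exact h.add (((hE.add hEε.posSemidef).smul hε.le).kronecker PosSemidef.one).fromBlocks_zero
  have := le_iff.mp (hEε.le_kronecker_of_posSemidef_fromBlocks hF hX hblock)
  rwa [add_kronecker, smul_kronecker, add_sub_right_comm] at this

end Kronecker

theorem trace_sqrt_mul_sqrt_concave [DecidableEq n] {M₁ N₁ M₂ N₂ : Matrix n n ℝ} (hM₁ : M₁.PosSemidef)
    (hN₁ : N₁.PosSemidef) (hM₂ : M₂.PosSemidef) (hN₂ : N₂.PosSemidef) {t : ℝ} (ht0 : 0 ≤ t)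
    (ht1 : t ≤ 1) (hM : (t • M₁ + (1 - t) • M₂).PosSemidef)
    (hN : (t • N₁ + (1 - t) • N₂).PosSemidef) :
    t * trace (hM₁.sqrt * hN₁.sqrt) + (1 - t) * trace (hM₂.sqrt * hN₂.sqrt)
      ≤ trace (hM.sqrt * hN.sqrt) := by
  set X := t • (hM₁.sqrt ⊗ₖ hN₁.sqrt) + (1 - t) • (hM₂.sqrt ⊗ₖ hN₂.sqrt)
  have hX : X.IsHermitian :=
    ((hM₁.posSemidef_sqrt.kronecker hN₁.posSemidef_sqrt).smul ht0).add
      ((hM₂.posSemidef_sqrt.kronecker hN₂.posSemidef_sqrt).smul (sub_nonneg.mpr ht1)) |>.1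
  have hblock : (fromBlocks ((hM.sqrt * hM.sqrt) ⊗ₖ 1) X X
      (1 ⊗ₖ (hN.sqrt * hN.sqrt))).PosSemidef := by
    have h₁ := posSemidef_fromBlocks_mul_self_kronecker hM₁.posSemidef_sqrt.1 hN₁.posSemidef_sqrt.1
    have h₂ := posSemidef_fromBlocks_mul_self_kronecker hM₂.posSemidef_sqrt.1 hN₂.posSemidef_sqrt.1
    rw [hM₁.sqrt_mul_self, hN₁.sqrt_mul_self] at h₁
    rw [hM₂.sqrt_mul_self, hN₂.sqrt_mul_self] at h₂
    rw [hM.sqrt_mul_self, hN.sqrt_mul_self, add_kronecker, kronecker_add, smul_kronecker,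
      smul_kronecker, kronecker_smul, kronecker_smul, ← fromBlocks_add, ← fromBlocks_smul,
      ← fromBlocks_smul]
    exact (h₁.smul ht0).add (h₂.smul (sub_nonneg.mpr ht1))
  have hle := le_iff.mp <| hM.posSemidef_sqrt.le_kronecker_of_posSemidef_fromBlocks
    hN.posSemidef_sqrt hX hblock
  have := hle.dotProduct_mulVec_nonneg (vec (1 : Matrix n n ℝ))
  simp only [X, star_trivial, sub_mulVec, add_mulVec, smul_mulVec, dotProduct_sub, dotProduct_add,
    dotProduct_smul, vec_one_dotProduct_kronecker_mulVec, smul_eq_mul, PosSemidef.transpose_sqrt]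
    at this
  linarith

end Matrix

lemma frobSq_eq_trace {k : ℕ} (X : Matrix (Fin k) (Fin k) ℝ) : frobSq X = trace (X * Xᵀ) := by
  simp only [frobSq, trace, diag, mul_apply, transpose_apply, sq]

lemma frobSq_sqrt_sub_sqrt {k : ℕ} {A B : Matrix (Fin k) (Fin k) ℝ} (hA : A.PosSemidef)
    (hB : B.PosSemidef) :
    frobSq (hA.sqrt - hB.sqrt) = trace A + trace B - 2 * trace (hA.sqrt * hB.sqrt) := by
  rw [frobSq_eq_trace, transpose_sub, hA.transpose_sqrt, hB.transpose_sqrt, Matrix.sub_mul,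
    Matrix.mul_sub, Matrix.mul_sub, trace_sub, trace_sub, trace_sub, hA.sqrt_mul_self,
    hB.sqrt_mul_self, trace_mul_comm hB.sqrt]
  ring

/-- (M,N) ↦ Tr[(√M − √N)²] = |√M − √N|_F² is jointly convex on pairs
of positive semidefinite matrices. -/
theorem sqrt_diff_frobenius_jointly_convex {k : ℕ}
    {M₁ N₁ M₂ N₂ : Matrix (Fin k) (Fin k) ℝ}
    (hM₁ : M₁.PosSemidef) (hN₁ : N₁.PosSemidef) (hM₂ : M₂.PosSemidef) (hN₂ : N₂.PosSemidef)
    (t : ℝ) (ht0 : 0 ≤ t) (ht1 : t ≤ 1)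
    (hM : (t • M₁ + (1 - t) • M₂).PosSemidef) (hN : (t • N₁ + (1 - t) • N₂).PosSemidef) :
    frobSq (hM.sqrt - hN.sqrt)
      ≤ t * frobSq (hM₁.sqrt - hN₁.sqrt) + (1 - t) * frobSq (hM₂.sqrt - hN₂.sqrt) := by
  have hconcave := trace_sqrt_mul_sqrt_concave hM₁ hN₁ hM₂ hN₂ ht0 ht1 hM hN
  rw [frobSq_sqrt_sub_sqrt, frobSq_sqrt_sub_sqrt, frobSq_sqrt_sub_sqrt]
  simp only [trace_add, trace_smul, smul_eq_mul]
  linarith
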